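/- Let g be osp(1|2n)^{(1)} or sl(1|2n)^{(2)}. The assignments γ^{1/2} ↦ −√−1·γ^{1/2} (so γ ↦ −γ), ξ⁺_{i,k} ↦ ξ⁺_{i,k}, ξ⁻_{i,k} ↦ (−1)^k ξ⁻_{i,k}, γ_i^{±1} ↦ γ_i^{±1}, κ_{i,k} ↦ (√−1)^{|k|} κ_{i,k} (for all 1≤i≤n, k∈ℤ, k≠0 where relevant) extend to a K-superalgebra automorphism of the Drinfeld superalgebra U_q^D(g); under this automorphism κ̂⁺_{i,k} ↦ (√−1)^{k} κ̂⁺_{i,k} and κ̂⁻_{i,−k} ↦ (√−1)^{k} κ̂⁻_{i,−k} for k≥0. -/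

import Mathlib

/-! The assignment is the action of `√−1` on a `ℤ/4`-grading of `U_q^D(g)`. Give `ξ⁺_{i,k}` and
`γ_i^{±1}` degree `0`, `ξ⁻_{i,k}` degree `2k`, `κ_{i,k}` degree `|k|` and `γ^{±1/2}` degree `∓1`.
Every defining relation is homogeneous for this grading (for `[κ_{i,r}, ξ⁻_{j,s}]` and
`[κ_{i,r}, κ_{j,−r}]` because `2|r| ≡ 2r mod 4`), so multiplying each generator by `√−1` to the
power of its degree induces an algebra endomorphism of the quotient, and its fourth power is the
identity. The formulas for `κ̂^±` hold because `κ̂⁺_{i,k}` and `κ̂⁻_{i,−k}` have degree `k`. -/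

set_option synthInstance.maxHeartbeats 1000000
set_option maxHeartbeats 1000000

noncomputable section

open scoped BigOperators

/-! ## The base field and basic scalars -/

/-- The base field `K = ℂ(q^{1/2})`. -/
abbrev KK : Type := RatFunc ℂ

/-- `q^{1/2}`. -/
def qh : KK := RatFunc.X

/-- integer powers of `q^{1/2}`. -/
def qpow (m : ℤ) : KK := qh ^ m

/-- a fixed square root of `−1`. -/
def ii : KK := RatFunc.C Complex.I

/-- The three series of affine Lie superalgebras. -/
inductive Gcase : Type
  | osp1  -- osp(1|2n)^{(1)}
  | sl2   -- sl(1|2n)^{(2)}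
  | osp2  -- osp(2|2n)^{(2)}
deriving DecidableEq

/-! ## Root data (normalisation `(α_n, α_n) = 1`), affine indices `0, 1, …, n` -/

/-- The symmetric bilinear form `(α_i, α_j)` on the simple roots, paper indices `0 ≤ i,j ≤ n`. -/
def Bc (c : Gcase) (n : ℕ) (i j : ℕ) : ℤ :=
  if i = j then
    (match c with
      | .osp1 => if i = 0 then 4 else if i = n then 1 else 2
      | .sl2 => if i = n then 1 else 2
      | .osp2 => if i = 0 ∨ i = n then 1 else 2)
  else if i + 1 = j ∨ j + 1 = i then
    (match c with
      | .osp1 => if i = 0 ∨ j = 0 then -2 else -1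
      | .sl2 => if i = 0 ∨ j = 0 then 0 else -1
      | .osp2 => -1)
  else if (i = 0 ∧ j = 2) ∨ (j = 0 ∧ i = 2) then
    (match c with | .sl2 => -1 | _ => 0)
  else 0

/-- Parity of the simple root `α_i` (`1` = odd, `0` = even). -/
def pc (c : Gcase) (n : ℕ) (i : ℕ) : ℕ :=
  match c with
  | .osp2 => if i = 0 ∨ i = n then 1 else 0
  | _ => if i = n then 1 else 0

/-- The structure constants `u_{i,j,r}` of the Drinfeld realisation (paper indices `1 ≤ i,j ≤ n`). -/
def uconst (c : Gcase) (n : ℕ) (i j : ℕ) (r : ℤ) : KK :=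
  match c with
  | .osp1 =>
      if i = n ∧ j = n then qpow (4 * r) - qpow (-(4 * r)) - qpow (2 * r) + qpow (-(2 * r))
      else qpow (2 * r * Bc c n i j) - qpow (-(2 * r * Bc c n i j))
  | .sl2 =>
      if i = n ∧ j = n then ((-1 : KK) ^ r) * (qpow (2 * r) - qpow (-(2 * r)))
      else qpow (2 * r * Bc c n i j) - qpow (-(2 * r * Bc c n i j))
  | .osp2 =>
      if i = n ∧ j = n then ((-1 : KK) ^ r) * (qpow (2 * r) - qpow (-(2 * r)))
      else (1 + (-1 : KK) ^ r) * (qpow (r * Bc c n i j) - qpow (-(r * Bc c n i j)))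

/-! ## The Drinfeld superalgebra `U_q^D(g)` -/

/-- Generators of the Drinfeld superalgebra: `ξ⁺_{i,r}`, `ξ⁻_{i,r}`, `γ_i`, `γ_i⁻¹`, `κ_{i,s}`,
`γ^{1/2}`, `γ^{−1/2}`.  Here `i : Fin n` stands for the paper's index `i + 1 ∈ {1, …, n}`. -/
inductive DGen (n : ℕ) : Type
  | xp : Fin n → ℤ → DGen n
  | xm : Fin n → ℤ → DGen n
  | ga : Fin n → DGen n
  | gai : Fin n → DGen n
  | ka : Fin n → ℤ → DGen n
  | gh : DGen n
  | ghi : DGen n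

/-- The free algebra on the Drinfeld generators. -/
abbrev DF (n : ℕ) : Type := FreeAlgebra KK (DGen n)

def dXp {n : ℕ} (i : Fin n) (r : ℤ) : DF n := FreeAlgebra.ι KK (DGen.xp i r)
def dXm {n : ℕ} (i : Fin n) (r : ℤ) : DF n := FreeAlgebra.ι KK (DGen.xm i r)
def dGa {n : ℕ} (i : Fin n) : DF n := FreeAlgebra.ι KK (DGen.ga i)
def dGai {n : ℕ} (i : Fin n) : DF n := FreeAlgebra.ι KK (DGen.gai i)
def dKa {n : ℕ} (i : Fin n) (s : ℤ) : DF n := FreeAlgebra.ι KK (DGen.ka i s)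
def dGh (n : ℕ) : DF n := FreeAlgebra.ι KK (DGen.gh : DGen n)
def dGhi (n : ℕ) : DF n := FreeAlgebra.ι KK (DGen.ghi : DGen n)

/-- paper index of `i : Fin n`. -/
def pid {n : ℕ} (i : Fin n) : ℕ := (i : ℕ) + 1

def dB (c : Gcase) (n : ℕ) (i j : Fin n) : ℤ := Bc c n (pid i) (pid j)
def du (c : Gcase) (n : ℕ) (i j : Fin n) (r : ℤ) : KK := uconst c n (pid i) (pid j) r
/-- `q_i = q^{(α_i,α_i)/2}`. -/
def dqi (c : Gcase) (n : ℕ) (i : Fin n) : KK := qpow (dB c n i i)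
/-- `q_i − q_i⁻¹`. -/
def dden (c : Gcase) (n : ℕ) (i : Fin n) : KK := dqi c n i - (dqi c n i)⁻¹
/-- parity of `ξ^±_{i,r}`. -/
def dpar (n : ℕ) (i : Fin n) : ℕ := if pid i = n then 1 else 0
/-- the admissible index set `I_g`. -/
def dadm (c : Gcase) (n : ℕ) (i : Fin n) (r : ℤ) : Prop :=
  c ≠ .osp2 ∨ pid i = n ∨ r % 2 = 0
/-- `γ^{m/2}` as a word in the generators `γ^{±1/2}`. -/
def dgampow (n : ℕ) (m : ℤ) : DF n :=
  if 0 ≤ m then (dGh n) ^ m.toNat else (dGhi n) ^ (-m).toNat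

/-- the Cartan integer `a_{ij} = 2(α_i,α_j)/(α_i,α_i)`. -/
def dacart (c : Gcase) (n : ℕ) (i j : Fin n) : ℤ := 2 * dB c n i j / dB c n i i
/-- the shift `θ` in Serre relation (A). -/
def dtheta (c : Gcase) (n : ℕ) (i j : Fin n) : ℤ :=
  match c with
  | .osp2 => if pid i = n ∧ pid j = n then 1 else 2
  | _ => 1

/-- The elements `κ̂⁺_{i,m}`, defined from the `κ`'s by the exponential generating series
`Σ_{m≥0} κ̂⁺_{i,m} u^{−m} = γ_i exp((q_i−q_i⁻¹) Σ_{m>0} κ_{i,m} u^{−m})`, here characterised by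
the equivalent recursion `(m+1) κ̂⁺_{i,m+1} = (q_i−q_i⁻¹) Σ_{r=1}^{m+1} r κ_{i,r} κ̂⁺_{i,m+1−r}`
(valid since the `κ_{i,r}`, `r > 0`, commute), `κ̂⁺_{i,0} = γ_i`. -/
def khatp (c : Gcase) (n : ℕ) (i : Fin n) : ℕ → DF n
  | 0 => dGa i
  | (m + 1) =>
      (((m : KK) + 1))⁻¹ • (dden c n i •
        ∑ r ∈ Finset.range (m + 1),
          (((r : ℕ) + 1 : ℕ) : KK) • (dKa i ((r : ℤ) + 1) * khatp c n i (m - r)))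
  decreasing_by exact Nat.lt_succ_of_le (Nat.sub_le m r)

/-- The elements `κ̂⁻_{i,−m}`, defined by
`Σ_{m≥0} κ̂⁻_{i,−m} u^{m} = γ_i⁻¹ exp((q_i⁻¹−q_i) Σ_{m>0} κ_{i,−m} u^{m})`. -/
def khatm (c : Gcase) (n : ℕ) (i : Fin n) : ℕ → DF n
  | 0 => dGai i
  | (m + 1) =>
      (((m : KK) + 1))⁻¹ • ((-(dden c n i)) •
        ∑ r ∈ Finset.range (m + 1),
          (((r : ℕ) + 1 : ℕ) : KK) • (dKa i (-((r : ℤ) + 1)) * khatm c n i (m - r)))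
  decreasing_by exact Nat.lt_succ_of_le (Nat.sub_le m r)

/-- `κ̂⁺_{i,r}` for `r : ℤ` (zero for `r < 0`). -/
def DKhatP (c : Gcase) (n : ℕ) (i : Fin n) (r : ℤ) : DF n :=
  if 0 ≤ r then khatp c n i r.toNat else 0

/-- `κ̂⁻_{i,r}` for `r : ℤ` (zero for `r > 0`). -/
def DKhatM (c : Gcase) (n : ℕ) (i : Fin n) (r : ℤ) : DF n :=
  if r ≤ 0 then khatm c n i (-r).toNat else 0

/-- the twisted bracket `[x,y]_a = xy − (−1)^{[x][y]} a · yx` for homogeneous `x, y` of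
parities `px, py`. -/
def sbr {n : ℕ} (px py : ℕ) (a : KK) (x y : DF n) : DF n :=
  x * y - (((-1 : KK) ^ (px * py)) * a) • (y * x)

/-- `[m]_z`. -/
def qint (z : KK) (m : ℕ) : KK := (z ^ m - z⁻¹ ^ m) / (z - z⁻¹)
/-- `[m]_z!`. -/
def qfact (z : KK) : ℕ → KK
  | 0 => 1
  | (m + 1) => qint z (m + 1) * qfact z m
/-- the Gaussian binomial coefficient `[N; k]_z`. -/
def qbinom (z : KK) (N k : ℕ) : KK := qfact z N / (qfact z k * qfact z (N - k))

/-- `sym_{r_1,…,r_ℓ} Σ_{k=0}^{ℓ} coef k · A_{r_{σ(1)}} ⋯ A_{r_{σ(k)}} · b · A_{r_{σ(k+1)}} ⋯`. -/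
def serreSum {n : ℕ} (ℓ : ℕ) (A : Fin ℓ → DF n) (b : DF n) (coef : ℕ → KK) : DF n :=
  ∑ σ : Equiv.Perm (Fin ℓ), ∑ k ∈ Finset.range (ℓ + 1),
    coef k • (((List.ofFn fun m => A (σ m)).take k).prod * b *
      ((List.ofFn fun m => A (σ m)).drop k).prod)

/-- The defining relations of the Drinfeld superalgebra `U_q^D(g)` (Definition 2.2 of the
paper).  Non-admissible generators (which occur for `osp(2|2n)^{(2)}`) and the generators
`κ_{i,0}` are set to zero. -/
inductive DRel (c : Gcase) (n : ℕ) : DF n → DF n → Prop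
  | killxp (i : Fin n) (r : ℤ) (h : ¬ dadm c n i r) : DRel c n (dXp i r) 0
  | killxm (i : Fin n) (r : ℤ) (h : ¬ dadm c n i r) : DRel c n (dXm i r) 0
  | killka (i : Fin n) (r : ℤ) (h : ¬ dadm c n i r ∨ r = 0) : DRel c n (dKa i r) 0
  -- `γ^{±1/2}` central, mutually inverse
  | gh_ghi : DRel c n (dGh n * dGhi n) 1
  | ghi_gh : DRel c n (dGhi n * dGh n) 1
  | gh_central (g : DGen n) :
      DRel c n (dGh n * FreeAlgebra.ι KK g) (FreeAlgebra.ι KK g * dGh n)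
  | ghi_central (g : DGen n) :
      DRel c n (dGhi n * FreeAlgebra.ι KK g) (FreeAlgebra.ι KK g * dGhi n)
  -- `γ_i` invertible, mutually commuting
  | ga_gai (i : Fin n) : DRel c n (dGa i * dGai i) 1
  | gai_ga (i : Fin n) : DRel c n (dGai i * dGa i) 1
  | ga_comm (i j : Fin n) : DRel c n (dGa i * dGa j) (dGa j * dGa i)
  | ga_ka (i j : Fin n) (s : ℤ) : DRel c n (dGa i * dKa j s) (dKa j s * dGa i)
  -- `γ_i ξ^±_{j,r} γ_i⁻¹ = q_i^{± a_{ij}} ξ^±_{j,r}`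
  | ga_xp (i j : Fin n) (r : ℤ) :
      DRel c n (dGa i * dXp j r * dGai i) (qpow (2 * dB c n i j) • dXp j r)
  | ga_xm (i j : Fin n) (r : ℤ) :
      DRel c n (dGa i * dXm j r * dGai i) (qpow (-(2 * dB c n i j)) • dXm j r)
  -- `[κ_{i,r}, ξ^±_{j,s}] = (u_{i,j,r} γ^{∓|r|/2} / (r(q_i−q_i⁻¹))) ξ^±_{j,s+r}`
  | ka_xp (i j : Fin n) (r s : ℤ) (hr : r ≠ 0) :
      DRel c n (dKa i r * dXp j s - dXp j s * dKa i r)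
        ((du c n i j r / ((r : KK) * dden c n i)) • (dgampow n (-|r|) * dXp j (s + r)))
  | ka_xm (i j : Fin n) (r s : ℤ) (hr : r ≠ 0) :
      DRel c n (dKa i r * dXm j s - dXm j s * dKa i r)
        ((du c n i j r / ((r : KK) * dden c n i)) • (dgampow n |r| * dXm j (s + r)))
  -- `[κ_{i,r}, κ_{j,s}] = δ_{r+s,0} u_{i,j,r}(γ^r − γ^{−r})/(r(q_i−q_i⁻¹)(q_j−q_j⁻¹))`
  | ka_ka (i j : Fin n) (r s : ℤ) (hr : r ≠ 0) (hs : s ≠ 0) :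
      DRel c n (dKa i r * dKa j s - dKa j s * dKa i r)
        (if s = -r then
          (du c n i j r / ((r : KK) * dden c n i * dden c n j)) •
            (dgampow n (2 * r) - dgampow n (-(2 * r)))
         else 0)
  -- `[ξ⁺_{i,r}, ξ⁻_{j,s}] = δ_{ij}(γ^{(r−s)/2} κ̂⁺_{i,r+s} − γ^{(s−r)/2} κ̂⁻_{i,r+s})/(q_i−q_i⁻¹)`
  | xpxm (i j : Fin n) (r s : ℤ) :
      DRel c n (dXp i r * dXm j s - ((-1 : KK) ^ (dpar n i * dpar n j)) • (dXm j s * dXp i r))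
        (if i = j then
          (dden c n i)⁻¹ •
            (dgampow n (r - s) * DKhatP c n i (r + s) - dgampow n (s - r) * DKhatM c n i (r + s))
         else 0)
  -- Serre relation (A)
  | serreA_p (i j : Fin n) (r s : ℤ) (h : ¬(c = Gcase.osp1 ∧ pid i = n ∧ pid j = n)) :
      DRel c n
        (sbr (dpar n i) (dpar n j) (qpow (2 * dB c n i j)) (dXp i (r + dtheta c n i j)) (dXp j s) +
         sbr (dpar n j) (dpar n i) (qpow (2 * dB c n j i)) (dXp j (s + dtheta c n i j)) (dXp i r)) 0
  | serreA_m (i j : Fin n) (r s : ℤ) (h : ¬(c = Gcase.osp1 ∧ pid i = n ∧ pid j = n)) :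
      DRel c n
        (sbr (dpar n i) (dpar n j) (qpow (2 * dB c n i j)) (dXm i (r - dtheta c n i j)) (dXm j s) +
         sbr (dpar n j) (dpar n i) (qpow (2 * dB c n j i)) (dXm j (s - dtheta c n i j)) (dXm i r)) 0
  -- Serre relation (B)
  | serreB_p (i j : Fin n) (hij : i ≠ j) (hi : pid i ≠ n)
      (rv : Fin (1 - dacart c n i j).toNat → ℤ) (s : ℤ) :
      DRel c n
        (serreSum (1 - dacart c n i j).toNat (fun m => dXp i (rv m)) (dXp j s)
          (fun k => ((-1 : KK) ^ k) * qbinom (dqi c n i) (1 - dacart c n i j).toNat k)) 0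
  | serreB_m (i j : Fin n) (hij : i ≠ j) (hi : pid i ≠ n)
      (rv : Fin (1 - dacart c n i j).toNat → ℤ) (s : ℤ) :
      DRel c n
        (serreSum (1 - dacart c n i j).toNat (fun m => dXm i (rv m)) (dXm j s)
          (fun k => ((-1 : KK) ^ k) * qbinom (dqi c n i) (1 - dacart c n i j).toNat k)) 0
  -- Serre relation (C)
  | serreC_p (i j : Fin n) (hi : pid i = n)
      (hj : (c = Gcase.sl2 ∧ pid j ≠ n) ∨ (c ≠ Gcase.sl2 ∧ pid j + 1 < n))
      (rv : Fin (1 - dacart c n i j).toNat → ℤ) (s : ℤ) :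
      DRel c n
        (serreSum (1 - dacart c n i j).toNat (fun m => dXp i (rv m)) (dXp j s)
          (fun k => qbinom (ii * dqi c n i) (1 - dacart c n i j).toNat k)) 0
  | serreC_m (i j : Fin n) (hi : pid i = n)
      (hj : (c = Gcase.sl2 ∧ pid j ≠ n) ∨ (c ≠ Gcase.sl2 ∧ pid j + 1 < n))
      (rv : Fin (1 - dacart c n i j).toNat → ℤ) (s : ℤ) :
      DRel c n
        (serreSum (1 - dacart c n i j).toNat (fun m => dXm i (rv m)) (dXm j s)
          (fun k => qbinom (ii * dqi c n i) (1 - dacart c n i j).toNat k)) 0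
  -- Serre relations (D), only for osp(1|2n)^{(1)}
  | serreD1_p (hc : c = Gcase.osp1) (i : Fin n) (hi : pid i = n) (rv : Fin 3 → ℤ) :
      DRel c n
        (∑ σ : Equiv.Perm (Fin 3),
          sbr 0 1 (qpow 4)
            (sbr 1 1 (qpow 2) (dXp i (rv (σ 0) + 1)) (dXp i (rv (σ 1)))) (dXp i (rv (σ 2)))) 0
  | serreD1_m (hc : c = Gcase.osp1) (i : Fin n) (hi : pid i = n) (rv : Fin 3 → ℤ) :
      DRel c n
        (∑ σ : Equiv.Perm (Fin 3),
          sbr 0 1 (qpow 4)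
            (sbr 1 1 (qpow 2) (dXm i (rv (σ 0) - 1)) (dXm i (rv (σ 1)))) (dXm i (rv (σ 2)))) 0
  | serreD2_p (hc : c = Gcase.osp1) (i : Fin n) (hi : pid i = n) (rv : Fin 2 → ℤ) :
      DRel c n
        (∑ σ : Equiv.Perm (Fin 2),
          (sbr 1 1 (qpow 2) (dXp i (rv (σ 0) + 2)) (dXp i (rv (σ 1))) -
            qpow 4 • sbr 1 1 (qpow (-6)) (dXp i (rv (σ 0) + 1)) (dXp i (rv (σ 1) + 1)))) 0
  | serreD2_m (hc : c = Gcase.osp1) (i : Fin n) (hi : pid i = n) (rv : Fin 2 → ℤ) :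
      DRel c n
        (∑ σ : Equiv.Perm (Fin 2),
          (sbr 1 1 (qpow 2) (dXm i (rv (σ 0) - 2)) (dXm i (rv (σ 1))) -
            qpow 4 • sbr 1 1 (qpow (-6)) (dXm i (rv (σ 0) - 1)) (dXm i (rv (σ 1) - 1)))) 0
  | serreD3_p (hc : c = Gcase.osp1) (i i' : Fin n) (hi : pid i = n) (hi' : pid i' + 1 = n)
      (rv : Fin 2 → ℤ) (k : ℤ) :
      DRel c n
        (∑ σ : Equiv.Perm (Fin 2),
          (qpow 2 • sbr 0 0 (qpow 4)
              (sbr 1 1 (qpow 2) (dXp i (rv (σ 0) + 1)) (dXp i (rv (σ 1)))) (dXp i' k) +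
           (qpow 2 + qpow (-2)) • sbr 1 1 1
              (sbr 0 1 (qpow 2) (dXp i' k) (dXp i (rv (σ 0) + 1))) (dXp i (rv (σ 1))))) 0
  | serreD3_m (hc : c = Gcase.osp1) (i i' : Fin n) (hi : pid i = n) (hi' : pid i' + 1 = n)
      (rv : Fin 2 → ℤ) (k : ℤ) :
      DRel c n
        (∑ σ : Equiv.Perm (Fin 2),
          (qpow 2 • sbr 0 0 (qpow 4)
              (sbr 1 1 (qpow 2) (dXm i (rv (σ 0) - 1)) (dXm i (rv (σ 1)))) (dXm i' k) +
           (qpow 2 + qpow (-2)) • sbr 1 1 1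
              (sbr 0 1 (qpow 2) (dXm i' k) (dXm i (rv (σ 0) - 1))) (dXm i (rv (σ 1))))) 0
  -- Serre relation (E), only for osp(2|2n)^{(2)}
  | serreE_p (hc : c = Gcase.osp2) (i i' : Fin n) (hi : pid i = n) (hi' : pid i' + 1 = n)
      (rv : Fin 2 → ℤ) (k : ℤ) :
      DRel c n
        (∑ σ : Equiv.Perm (Fin 2),
          sbr 1 1 1 (sbr 0 1 (qpow 2) (dXp i' k) (dXp i (rv (σ 0) + 1))) (dXp i (rv (σ 1)))) 0
  | serreE_m (hc : c = Gcase.osp2) (i i' : Fin n) (hi : pid i = n) (hi' : pid i' + 1 = n)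
      (rv : Fin 2 → ℤ) (k : ℤ) :
      DRel c n
        (∑ σ : Equiv.Perm (Fin 2),
          sbr 1 1 1 (sbr 0 1 (qpow 2) (dXm i' k) (dXm i (rv (σ 0) - 1))) (dXm i (rv (σ 1)))) 0

/-- The Drinfeld superalgebra `U_q^D(g)`. -/
abbrev UqD (c : Gcase) (n : ℕ) : Type := RingQuot (DRel c n)

/-- the quotient map. -/
def dπ (c : Gcase) (n : ℕ) : DF n →ₐ[KK] UqD c n := RingQuot.mkAlgHom KK (DRel c n)

def vXp (c : Gcase) (n : ℕ) (i : Fin n) (r : ℤ) : UqD c n := dπ c n (dXp i r)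
def vXm (c : Gcase) (n : ℕ) (i : Fin n) (r : ℤ) : UqD c n := dπ c n (dXm i r)
def vGa (c : Gcase) (n : ℕ) (i : Fin n) : UqD c n := dπ c n (dGa i)
def vGai (c : Gcase) (n : ℕ) (i : Fin n) : UqD c n := dπ c n (dGai i)
def vKa (c : Gcase) (n : ℕ) (i : Fin n) (s : ℤ) : UqD c n := dπ c n (dKa i s)
def vGh (c : Gcase) (n : ℕ) : UqD c n := dπ c n (dGh n)
def vGhi (c : Gcase) (n : ℕ) : UqD c n := dπ c n (dGhi n)
/-- `γ = (γ^{1/2})²`. -/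
def vGam (c : Gcase) (n : ℕ) : UqD c n := vGh c n * vGh c n
/-- `γ⁻¹`. -/
def vGamInv (c : Gcase) (n : ℕ) : UqD c n := vGhi c n * vGhi c n

/-! ## The quantum affine superalgebra `U_q(g)` in the Chevalley presentation -/

/-- Chevalley generators `e_i`, `f_i`, `k_i`, `k_i⁻¹`, `0 ≤ i ≤ n`. -/
inductive CGen (n : ℕ) : Type
  | e : Fin (n + 1) → CGen n
  | f : Fin (n + 1) → CGen n
  | k : Fin (n + 1) → CGen n
  | ki : Fin (n + 1) → CGen n

abbrev CF (n : ℕ) : Type := FreeAlgebra KK (CGen n)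

def cE {n : ℕ} (i : Fin (n + 1)) : CF n := FreeAlgebra.ι KK (CGen.e i)
def cF {n : ℕ} (i : Fin (n + 1)) : CF n := FreeAlgebra.ι KK (CGen.f i)
def cK {n : ℕ} (i : Fin (n + 1)) : CF n := FreeAlgebra.ι KK (CGen.k i)
def cKi {n : ℕ} (i : Fin (n + 1)) : CF n := FreeAlgebra.ι KK (CGen.ki i)

def cB (c : Gcase) (n : ℕ) (i j : Fin (n + 1)) : ℤ := Bc c n (i : ℕ) (j : ℕ)
def cpar (c : Gcase) (n : ℕ) (i : Fin (n + 1)) : ℕ := pc c n (i : ℕ)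
def cqi (c : Gcase) (n : ℕ) (i : Fin (n + 1)) : KK := qpow (cB c n i i)
def cden (c : Gcase) (n : ℕ) (i : Fin (n + 1)) : KK := cqi c n i - (cqi c n i)⁻¹
def cacart (c : Gcase) (n : ℕ) (i j : Fin (n + 1)) : ℤ := 2 * cB c n i j / cB c n i i

/-- `Ad_{e_i}(x) = e_i x − (−1)^{[e_i][x]} k_i x k_i⁻¹ e_i` (`p` = parity of `x`). -/
def adE (c : Gcase) (n : ℕ) (i : Fin (n + 1)) (p : ℕ) (x : CF n) : CF n :=
  cE i * x - ((-1 : KK) ^ (cpar c n i * p)) • (cK i * x * cKi i * cE i)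

/-- `Ad_{f_i}(x) = f_i x − (−1)^{[f_i][x]} k_i⁻¹ x k_i f_i`. -/
def adF (c : Gcase) (n : ℕ) (i : Fin (n + 1)) (p : ℕ) (x : CF n) : CF n :=
  cF i * x - ((-1 : KK) ^ (cpar c n i * p)) • (cKi i * x * cK i * cF i)

/-- `(Ad_{e_i})^m (x)` for `x` of parity `p0` (with parity book-keeping). -/
def adEiter (c : Gcase) (n : ℕ) (i : Fin (n + 1)) (p0 : ℕ) : ℕ → CF n → CF n
  | 0, x => x
  | (m + 1), x => adE c n i (cpar c n i * m + p0) (adEiter c n i p0 m x)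

def adFiter (c : Gcase) (n : ℕ) (i : Fin (n + 1)) (p0 : ℕ) : ℕ → CF n → CF n
  | 0, x => x
  | (m + 1), x => adF c n i (cpar c n i * m + p0) (adFiter c n i p0 m x)

/-- Defining relations of the quantum affine superalgebra `U_q(g)` (Definition 2.1). -/
inductive CRel (c : Gcase) (n : ℕ) : CF n → CF n → Prop
  | k_ki (i : Fin (n + 1)) : CRel c n (cK i * cKi i) 1
  | ki_k (i : Fin (n + 1)) : CRel c n (cKi i * cK i) 1
  | k_comm (i j : Fin (n + 1)) : CRel c n (cK i * cK j) (cK j * cK i)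
  | k_e (i j : Fin (n + 1)) :
      CRel c n (cK i * cE j * cKi i) (qpow (2 * cB c n i j) • cE j)
  | k_f (i j : Fin (n + 1)) :
      CRel c n (cK i * cF j * cKi i) (qpow (-(2 * cB c n i j)) • cF j)
  | e_f (i j : Fin (n + 1)) :
      CRel c n (cE i * cF j - ((-1 : KK) ^ (cpar c n i * cpar c n j)) • (cF j * cE i))
        (if i = j then (cden c n i)⁻¹ • (cK i - cKi i) else 0)
  | serre_e (i j : Fin (n + 1)) (h : i ≠ j) :
      CRel c n (adEiter c n i (cpar c n j) (1 - cacart c n i j).toNat (cE j)) 0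
  | serre_f (i j : Fin (n + 1)) (h : i ≠ j) :
      CRel c n (adFiter c n i (cpar c n j) (1 - cacart c n i j).toNat (cF j)) 0

/-- The quantum affine superalgebra `U_q(g)`. -/
abbrev Uq (c : Gcase) (n : ℕ) : Type := RingQuot (CRel c n)

def cπ (c : Gcase) (n : ℕ) : CF n →ₐ[KK] Uq c n := RingQuot.mkAlgHom KK (CRel c n)

def wE (c : Gcase) (n : ℕ) (i : Fin (n + 1)) : Uq c n := cπ c n (cE i)
def wF (c : Gcase) (n : ℕ) (i : Fin (n + 1)) : Uq c n := cπ c n (cF i)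
def wK (c : Gcase) (n : ℕ) (i : Fin (n + 1)) : Uq c n := cπ c n (cK i)
def wKi (c : Gcase) (n : ℕ) (i : Fin (n + 1)) : Uq c n := cπ c n (cKi i)

/-! ## Adjoint chains in `U_q^D(g)` -/

/-- `Ad_{ξ⁻_{i,0}}(x) = ξ⁻_{i,0} x − (−1)^{[ξ⁻_{i,0}][x]} γ_i⁻¹ x γ_i ξ⁻_{i,0}`. -/
def AdXmQ (c : Gcase) (n : ℕ) (i : Fin n) (p : ℕ) (x : UqD c n) : UqD c n :=
  vXm c n i 0 * x -
    ((-1 : KK) ^ (dpar n i * p)) • (vGai c n i * x * vGa c n i * vXm c n i 0)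

/-- `Ad_{ξ⁺_{i,0}}(x) = ξ⁺_{i,0} x − (−1)^{[ξ⁺_{i,0}][x]} γ_i x γ_i⁻¹ ξ⁺_{i,0}`. -/
def AdXpQ (c : Gcase) (n : ℕ) (i : Fin n) (p : ℕ) (x : UqD c n) : UqD c n :=
  vXp c n i 0 * x -
    ((-1 : KK) ^ (dpar n i * p)) • (vGa c n i * x * vGai c n i * vXp c n i 0)

/-- iterated `Ad_{ξ⁻}` along a list of indices (head applied last), with parity
book-keeping: `p0` is the parity of the initial element `x`. -/
def adChainM (c : Gcase) (n : ℕ) : List (Fin n) → ℕ → UqD c n → UqD c n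
  | [], _, x => x
  | (i :: t), p0, x => AdXmQ c n i ((t.map (dpar n)).sum + p0) (adChainM c n t p0 x)

def adChainP (c : Gcase) (n : ℕ) : List (Fin n) → ℕ → UqD c n → UqD c n
  | [], _, x => x
  | (i :: t), p0, x => AdXpQ c n i ((t.map (dpar n)).sum + p0) (adChainP c n t p0 x)

/-- `m % n` as an element of `Fin n`. -/
def fnat (n : ℕ) [NeZero n] (m : ℕ) : Fin n :=
  ⟨m % n, Nat.mod_lt _ (Nat.pos_of_ne_zero (NeZero.ne n))⟩

def vKhatP (c : Gcase) (n : ℕ) (i : Fin n) (k : ℕ) : UqD c n := dπ c n (khatp c n i k)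
def vKhatM (c : Gcase) (n : ℕ) (i : Fin n) (k : ℕ) : UqD c n := dπ c n (khatm c n i k)

theorem zpow_eq_zpow_of_modEq {G₀ : Type*} [GroupWithZero G₀] {ζ : G₀} {N : ℕ} (hζ : ζ ^ N = 1)
    {w w' : ℤ} (h : w ≡ w' [ZMOD N]) : ζ ^ w = ζ ^ w' := by
  obtain ⟨k, hk⟩ := h.dvd
  rcases eq_or_ne ζ 0 with rfl | hζ0
  · rcases N with _ | N
    · rw [show w' = w by simpa [sub_eq_zero] using hk]
    · simp at hζ
  · rw [show w' = w + N * k by omega, zpow_add₀ hζ0, zpow_mul, zpow_natCast, hζ, one_zpow,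
      mul_one]

theorem Equiv.Perm.fin_two_add_eq (σ : Equiv.Perm (Fin 2)) (v : Fin 2 → ℤ) :
    v (σ 0) + v (σ 1) = v 0 + v 1 := by
  simpa [Fin.sum_univ_two] using Equiv.sum_comp σ v

theorem Equiv.Perm.fin_three_add_eq (σ : Equiv.Perm (Fin 3)) (v : Fin 3 → ℤ) :
    v (σ 0) + v (σ 1) + v (σ 2) = v 0 + v 1 + v 2 := by
  simpa [Fin.sum_univ_three] using Equiv.sum_comp σ v

namespace FreeAlgebra

variable {R X : Type*} [Field R]

def weightScale (wt : X → ℤ) (ζ : R) : FreeAlgebra R X →ₐ[R] FreeAlgebra R X :=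
  lift R fun x => ζ ^ wt x • ι R x

theorem weightScale_ι (wt : X → ℤ) (ζ : R) (x : X) :
    weightScale wt ζ (ι R x) = ζ ^ wt x • ι R x :=
  lift_ι_apply _ _

end FreeAlgebra

theorem AlgHom.mul_mem_eigenspace {R A : Type*} [CommRing R] [Ring A] [Algebra R A]
    (f : A →ₐ[R] A) {μ ν : R} {a b : A} (ha : a ∈ Module.End.eigenspace f.toLinearMap μ)
    (hb : b ∈ Module.End.eigenspace f.toLinearMap ν) :
    a * b ∈ Module.End.eigenspace f.toLinearMap (μ * ν) := by
  simp only [Module.End.mem_eigenspace_iff, AlgHom.toLinearMap_apply] at *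
  rw [map_mul, ha, hb, smul_mul_smul_comm]

theorem RingQuot.mkAlgHom_eq_of_mem_eigenspace {R A : Type*} [CommRing R] [Ring A] [Algebra R A]
    {r : A → A → Prop} (f : A →ₐ[R] A) {μ : R} {a b : A} (hab : r a b)
    (ha : a ∈ Module.End.eigenspace f.toLinearMap μ)
    (hb : b ∈ Module.End.eigenspace f.toLinearMap μ) :
    mkAlgHom R r (f a) = mkAlgHom R r (f b) := by
  simp only [Module.End.mem_eigenspace_iff, AlgHom.toLinearMap_apply] at ha hb
  rw [ha, hb, map_smul, map_smul, mkAlgHom_rel R hab]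

theorem ii_sq : ii ^ 2 = -1 := by
  rw [ii, ← map_pow, Complex.I_sq, map_neg, map_one]

theorem ii_ne_zero : ii ≠ 0 :=
  fun h => by simpa [h] using ii_sq

theorem ii_zpow_neg_one : ii ^ (-1 : ℤ) = -ii := by
  rw [zpow_neg_one, inv_eq_of_mul_eq_one_right (by rw [mul_neg, ← sq, ii_sq, neg_neg])]

theorem ii_zpow_two_mul (k : ℤ) : ii ^ (2 * k) = (-1) ^ k := by
  rw [zpow_mul, zpow_ofNat, ii_sq]

theorem ii_zpow_eq_of_modEq {w w' : ℤ} (h : w ≡ w' [ZMOD 4]) : ii ^ w = ii ^ w' :=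
  zpow_eq_zpow_of_modEq (by rw [show ii ^ 4 = (ii ^ 2) ^ 2 by ring, ii_sq, neg_one_sq]) h

def DGen.weight {n : ℕ} : DGen n → ℤ
  | .xp _ _ => 0
  | .xm _ r => 2 * r
  | .ga _ => 0
  | .gai _ => 0
  | .ka _ s => |s|
  | .gh => -1
  | .ghi => 1

def weightSpace (n : ℕ) (w : ℤ) : Submodule KK (DF n) :=
  Module.End.eigenspace (FreeAlgebra.weightScale DGen.weight ii).toLinearMap (ii ^ w)

section WeightSpace

variable {n : ℕ} {w w' : ℤ} {x y : DF n}

theorem mem_weightSpace_iff :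
    x ∈ weightSpace n w ↔ FreeAlgebra.weightScale DGen.weight ii x = ii ^ w • x :=
  Module.End.mem_eigenspace_iff

theorem weightSpace_congr (h : w ≡ w' [ZMOD 4]) : weightSpace n w = weightSpace n w' := by
  rw [weightSpace, weightSpace, ii_zpow_eq_of_modEq h]

theorem mem_weightSpace_of_modEq (hx : x ∈ weightSpace n w) (h : w ≡ w' [ZMOD 4]) :
    x ∈ weightSpace n w' :=
  weightSpace_congr h ▸ hx

theorem exists_weightSpace_of_modEq (hx : x ∈ weightSpace n w) (hy : y ∈ weightSpace n w')
    (h : w ≡ w' [ZMOD 4]) : ∃ w, x ∈ weightSpace n w ∧ y ∈ weightSpace n w :=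
  ⟨w, hx, mem_weightSpace_of_modEq hy h.symm⟩

theorem sum_mem_weightSpace_of_modEq {ι : Type*} {s : Finset ι} {F : ι → DF n} {v : ι → ℤ}
    (hF : ∀ i ∈ s, F i ∈ weightSpace n (v i)) (hv : ∀ i ∈ s, v i ≡ w [ZMOD 4]) :
    ∑ i ∈ s, F i ∈ weightSpace n w :=
  sum_mem fun i hi => mem_weightSpace_of_modEq (hF i hi) (hv i hi)

theorem one_mem_weightSpace : (1 : DF n) ∈ weightSpace n 0 := by
  simp [weightSpace]

theorem mul_mem_weightSpace (hx : x ∈ weightSpace n w) (hy : y ∈ weightSpace n w') :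
    x * y ∈ weightSpace n (w + w') := by
  rw [weightSpace, zpow_add₀ ii_ne_zero]
  exact AlgHom.mul_mem_eigenspace _ hx hy

theorem pow_mem_weightSpace (hx : x ∈ weightSpace n w) (k : ℕ) :
    x ^ k ∈ weightSpace n (k * w) := by
  induction k with
  | zero => simpa using one_mem_weightSpace
  | succ k ih => simpa [pow_succ, add_mul] using mul_mem_weightSpace ih hx

theorem list_prod_map_mem_weightSpace {ι : Type*} {A : ι → DF n} {v : ι → ℤ}
    (hA : ∀ i, A i ∈ weightSpace n (v i)) (l : List ι) :
    (l.map A).prod ∈ weightSpace n (l.map v).sum := by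
  induction l with
  | nil => exact one_mem_weightSpace
  | cons i l ih => simpa using mul_mem_weightSpace (hA i) ih

theorem mul_sub_smul_mul_mem_weightSpace (u : KK) (hx : x ∈ weightSpace n w)
    (hy : y ∈ weightSpace n w') : x * y - u • (y * x) ∈ weightSpace n (w + w') :=
  sub_mem (mul_mem_weightSpace hx hy)
    (Submodule.smul_mem _ u (add_comm w' w ▸ mul_mem_weightSpace hy hx))

theorem commutator_mem_weightSpace (hx : x ∈ weightSpace n w) (hy : y ∈ weightSpace n w') :
    x * y - y * x ∈ weightSpace n (w + w') := by
  simpa using mul_sub_smul_mul_mem_weightSpace 1 hx hy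

theorem sbr_mem_weightSpace (px py : ℕ) (a : KK) (hx : x ∈ weightSpace n w)
    (hy : y ∈ weightSpace n w') : sbr px py a x y ∈ weightSpace n (w + w') :=
  mul_sub_smul_mul_mem_weightSpace _ hx hy

theorem serreSum_mem_weightSpace {ℓ : ℕ} {A : Fin ℓ → DF n} {v : Fin ℓ → ℤ}
    (hA : ∀ m, A m ∈ weightSpace n (v m)) (hx : x ∈ weightSpace n w) (coef : ℕ → KK) :
    serreSum ℓ A x coef ∈ weightSpace n (∑ m, v m + w) := by
  refine sum_mem fun σ _ => sum_mem fun k _ => Submodule.smul_mem _ _ ?_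
  have hsum : ((List.ofFn σ).take k |>.map v).sum + ((List.ofFn σ).drop k |>.map v).sum
      = ∑ m, v m := by
    rw [← List.sum_append, ← List.map_append, List.take_append_drop, List.map_ofFn,
      List.sum_ofFn, Function.comp_def, Equiv.sum_comp σ v]
  rw [show (List.ofFn fun m => A (σ m)) = (List.ofFn σ).map A from (List.map_ofFn ..).symm,
    ← List.map_take, ← List.map_drop]
  refine mem_weightSpace_of_modEq (mul_mem_weightSpace (mul_mem_weightSpace
    (list_prod_map_mem_weightSpace hA _) hx) (list_prod_map_mem_weightSpace hA _)) ?_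
  rw [← hsum, add_right_comm]

theorem ι_mem_weightSpace (g : DGen n) : FreeAlgebra.ι KK g ∈ weightSpace n g.weight :=
  mem_weightSpace_iff.2 (FreeAlgebra.weightScale_ι _ _ _)

theorem dXp_mem_weightSpace (i : Fin n) (r : ℤ) : dXp i r ∈ weightSpace n 0 :=
  ι_mem_weightSpace (.xp i r)

theorem dXm_mem_weightSpace (i : Fin n) (r : ℤ) : dXm i r ∈ weightSpace n (2 * r) :=
  ι_mem_weightSpace (.xm i r)

theorem dGa_mem_weightSpace (i : Fin n) : dGa i ∈ weightSpace n 0 :=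
  ι_mem_weightSpace (.ga i)

theorem dGai_mem_weightSpace (i : Fin n) : dGai i ∈ weightSpace n 0 :=
  ι_mem_weightSpace (.gai i)

theorem dKa_mem_weightSpace (i : Fin n) (s : ℤ) : dKa i s ∈ weightSpace n |s| :=
  ι_mem_weightSpace (.ka i s)

theorem dGh_mem_weightSpace : dGh n ∈ weightSpace n (-1) :=
  ι_mem_weightSpace .gh

theorem dGhi_mem_weightSpace : dGhi n ∈ weightSpace n 1 :=
  ι_mem_weightSpace .ghi

theorem dgampow_mem_weightSpace (m : ℤ) : dgampow n m ∈ weightSpace n (-m) := by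
  unfold dgampow
  split_ifs
  · exact mem_weightSpace_of_modEq (pow_mem_weightSpace dGh_mem_weightSpace _)
      (by rw [Int.ModEq]; omega)
  · exact mem_weightSpace_of_modEq (pow_mem_weightSpace dGhi_mem_weightSpace _)
      (by rw [Int.ModEq]; omega)

theorem khatp_mem_weightSpace (c : Gcase) (i : Fin n) (k : ℕ) :
    khatp c n i k ∈ weightSpace n k := by
  induction k using Nat.strong_induction_on with
  | _ k ih =>
    match k with
    | 0 => rw [khatp]; exact dGa_mem_weightSpace i
    | m + 1 =>
      rw [khatp]
      refine Submodule.smul_mem _ _ (Submodule.smul_mem _ _ (sum_mem fun r hr =>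
        Submodule.smul_mem _ _ (mem_weightSpace_of_modEq (mul_mem_weightSpace
          (dKa_mem_weightSpace i _) (ih (m - r) (by omega))) ?_)))
      rw [Finset.mem_range] at hr
      rw [Int.ModEq, abs_eq_max_neg]
      omega

theorem khatm_mem_weightSpace (c : Gcase) (i : Fin n) (k : ℕ) :
    khatm c n i k ∈ weightSpace n k := by
  induction k using Nat.strong_induction_on with
  | _ k ih =>
    match k with
    | 0 => rw [khatm]; exact dGai_mem_weightSpace i
    | m + 1 =>
      rw [khatm]
      refine Submodule.smul_mem _ _ (Submodule.smul_mem _ _ (sum_mem fun r hr =>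
        Submodule.smul_mem _ _ (mem_weightSpace_of_modEq (mul_mem_weightSpace
          (dKa_mem_weightSpace i _) (ih (m - r) (by omega))) ?_)))
      rw [Finset.mem_range] at hr
      rw [Int.ModEq, abs_eq_max_neg]
      omega

theorem DKhatP_mem_weightSpace (c : Gcase) (i : Fin n) (r : ℤ) :
    DKhatP c n i r ∈ weightSpace n r := by
  unfold DKhatP
  split_ifs with hr
  · simpa [Int.toNat_of_nonneg hr] using khatp_mem_weightSpace c i r.toNat
  · exact zero_mem _

theorem DKhatM_mem_weightSpace (c : Gcase) (i : Fin n) (r : ℤ) :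
    DKhatM c n i r ∈ weightSpace n (-r) := by
  unfold DKhatM
  split_ifs with hr
  · simpa [Int.toNat_of_nonneg (neg_nonneg.2 hr)] using khatm_mem_weightSpace c i (-r).toNat
  · exact zero_mem _

end WeightSpace

theorem DRel.exists_weightSpace {c : Gcase} {n : ℕ} {a b : DF n} (h : DRel c n a b) :
    ∃ w, a ∈ weightSpace n w ∧ b ∈ weightSpace n w := by
  cases h with
  | killxp i r => exact ⟨_, dXp_mem_weightSpace i r, zero_mem _⟩
  | killxm i r => exact ⟨_, dXm_mem_weightSpace i r, zero_mem _⟩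
  | killka i r => exact ⟨_, dKa_mem_weightSpace i r, zero_mem _⟩
  | gh_ghi =>
    exact exists_weightSpace_of_modEq
      (mul_mem_weightSpace dGh_mem_weightSpace dGhi_mem_weightSpace) one_mem_weightSpace rfl
  | ghi_gh =>
    exact exists_weightSpace_of_modEq
      (mul_mem_weightSpace dGhi_mem_weightSpace dGh_mem_weightSpace) one_mem_weightSpace rfl
  | gh_central g =>
    exact exists_weightSpace_of_modEq (mul_mem_weightSpace dGh_mem_weightSpace
      (ι_mem_weightSpace g)) (mul_mem_weightSpace (ι_mem_weightSpace g) dGh_mem_weightSpace)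
      (by rw [add_comm])
  | ghi_central g =>
    exact exists_weightSpace_of_modEq (mul_mem_weightSpace dGhi_mem_weightSpace
      (ι_mem_weightSpace g)) (mul_mem_weightSpace (ι_mem_weightSpace g) dGhi_mem_weightSpace)
      (by rw [add_comm])
  | ga_gai i =>
    exact ⟨_, mul_mem_weightSpace (dGa_mem_weightSpace i) (dGai_mem_weightSpace i),
      one_mem_weightSpace⟩
  | gai_ga i =>
    exact ⟨_, mul_mem_weightSpace (dGai_mem_weightSpace i) (dGa_mem_weightSpace i),
      one_mem_weightSpace⟩
  | ga_comm i j =>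
    exact ⟨_, mul_mem_weightSpace (dGa_mem_weightSpace i) (dGa_mem_weightSpace j),
      mul_mem_weightSpace (dGa_mem_weightSpace j) (dGa_mem_weightSpace i)⟩
  | ga_ka i j s =>
    exact exists_weightSpace_of_modEq
      (mul_mem_weightSpace (dGa_mem_weightSpace i) (dKa_mem_weightSpace j s))
      (mul_mem_weightSpace (dKa_mem_weightSpace j s) (dGa_mem_weightSpace i)) (by rw [add_comm])
  | ga_xp i j r =>
    exact ⟨_, mul_mem_weightSpace (mul_mem_weightSpace (dGa_mem_weightSpace i)
      (dXp_mem_weightSpace j r)) (dGai_mem_weightSpace i),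
      Submodule.smul_mem _ _ (dXp_mem_weightSpace j r)⟩
  | ga_xm i j r =>
    exact exists_weightSpace_of_modEq (mul_mem_weightSpace (mul_mem_weightSpace
      (dGa_mem_weightSpace i) (dXm_mem_weightSpace j r)) (dGai_mem_weightSpace i))
      (Submodule.smul_mem _ _ (dXm_mem_weightSpace j r)) (by rw [zero_add, add_zero])
  | ka_xp i j r s =>
    exact exists_weightSpace_of_modEq
      (commutator_mem_weightSpace (dKa_mem_weightSpace i r) (dXp_mem_weightSpace j s))
      (Submodule.smul_mem _ _ (mul_mem_weightSpace (dgampow_mem_weightSpace _)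
        (dXp_mem_weightSpace j (s + r)))) (by rw [neg_neg])
  | ka_xm i j r s =>
    exact exists_weightSpace_of_modEq
      (commutator_mem_weightSpace (dKa_mem_weightSpace i r) (dXm_mem_weightSpace j s))
      (Submodule.smul_mem _ _ (mul_mem_weightSpace (dgampow_mem_weightSpace _)
        (dXm_mem_weightSpace j (s + r)))) (by rw [Int.ModEq, abs_eq_max_neg]; omega)
  | ka_ka i j r s =>
    have hl := commutator_mem_weightSpace (dKa_mem_weightSpace i r) (dKa_mem_weightSpace j s)
    split_ifs with hs
    · subst hs
      refine exists_weightSpace_of_modEq hl (Submodule.smul_mem _ _ (sub_mem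
        (dgampow_mem_weightSpace _) (mem_weightSpace_of_modEq (dgampow_mem_weightSpace _)
          (by rw [Int.ModEq]; omega)))) ?_
      rw [Int.ModEq, abs_neg, abs_eq_max_neg]
      omega
    · exact ⟨_, hl, zero_mem _⟩
  | xpxm i j r s =>
    have hl := mul_sub_smul_mul_mem_weightSpace ((-1 : KK) ^ (dpar n i * dpar n j))
      (dXp_mem_weightSpace i r) (dXm_mem_weightSpace j s)
    split_ifs with hij
    · refine exists_weightSpace_of_modEq hl (Submodule.smul_mem _ _ (sub_mem
        (mul_mem_weightSpace (dgampow_mem_weightSpace _) (DKhatP_mem_weightSpace c i _))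
        (mem_weightSpace_of_modEq (mul_mem_weightSpace (dgampow_mem_weightSpace _)
          (DKhatM_mem_weightSpace c i _)) ?_))) ?_ <;>
      · rw [Int.ModEq]; omega
    · exact ⟨_, hl, zero_mem _⟩
  | serreA_p i j r s =>
    exact ⟨_, add_mem (sbr_mem_weightSpace _ _ _ (dXp_mem_weightSpace _ _)
      (dXp_mem_weightSpace _ _)) (sbr_mem_weightSpace _ _ _ (dXp_mem_weightSpace _ _)
      (dXp_mem_weightSpace _ _)), zero_mem _⟩
  | serreA_m i j r s =>
    exact ⟨_, add_mem (sbr_mem_weightSpace _ _ _ (dXm_mem_weightSpace _ _)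
      (dXm_mem_weightSpace _ _)) (mem_weightSpace_of_modEq (sbr_mem_weightSpace _ _ _
      (dXm_mem_weightSpace _ _) (dXm_mem_weightSpace _ _)) (by rw [Int.ModEq]; omega)),
      zero_mem _⟩
  | serreB_p i j _ _ rv s | serreC_p i j _ _ rv s =>
    exact ⟨_, serreSum_mem_weightSpace (fun m => dXp_mem_weightSpace i (rv m))
      (dXp_mem_weightSpace j s) _, zero_mem _⟩
  | serreB_m i j _ _ rv s | serreC_m i j _ _ rv s =>
    exact ⟨_, serreSum_mem_weightSpace (fun m => dXm_mem_weightSpace i (rv m))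
      (dXm_mem_weightSpace j s) _, zero_mem _⟩
  | serreD1_p _ i _ rv =>
    exact ⟨_, sum_mem fun σ _ => sbr_mem_weightSpace _ _ _ (sbr_mem_weightSpace _ _ _
      (dXp_mem_weightSpace _ _) (dXp_mem_weightSpace _ _)) (dXp_mem_weightSpace _ _), zero_mem _⟩
  | serreD1_m _ i _ rv =>
    refine ⟨_, sum_mem_weightSpace_of_modEq (fun σ _ => sbr_mem_weightSpace _ _ _
      (sbr_mem_weightSpace _ _ _ (dXm_mem_weightSpace _ _) (dXm_mem_weightSpace _ _))
      (dXm_mem_weightSpace _ _)) (w := 2 * (rv 0 + rv 1 + rv 2) - 2) fun σ _ => ?_, zero_mem _⟩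
    have := σ.fin_three_add_eq rv
    rw [Int.ModEq]
    omega
  | serreD2_p _ i _ rv =>
    exact ⟨_, sum_mem fun σ _ => sub_mem (sbr_mem_weightSpace _ _ _
      (dXp_mem_weightSpace _ _) (dXp_mem_weightSpace _ _)) (Submodule.smul_mem _ _
      (sbr_mem_weightSpace _ _ _ (dXp_mem_weightSpace _ _) (dXp_mem_weightSpace _ _))),
      zero_mem _⟩
  | serreD2_m _ i _ rv =>
    refine ⟨_, sum_mem_weightSpace_of_modEq (fun σ _ => sub_mem (sbr_mem_weightSpace _ _ _
      (dXm_mem_weightSpace _ _) (dXm_mem_weightSpace _ _)) (mem_weightSpace_of_modEq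
      (Submodule.smul_mem _ _ (sbr_mem_weightSpace _ _ _ (dXm_mem_weightSpace _ _)
      (dXm_mem_weightSpace _ _))) (by rw [Int.ModEq]; omega)))
      (w := 2 * (rv 0 + rv 1) - 4) fun σ _ => ?_, zero_mem _⟩
    have := σ.fin_two_add_eq rv
    rw [Int.ModEq]
    omega
  | serreD3_p _ i i' _ _ rv k =>
    exact ⟨_, sum_mem fun σ _ => add_mem
      (Submodule.smul_mem _ _ (sbr_mem_weightSpace _ _ _ (sbr_mem_weightSpace _ _ _
        (dXp_mem_weightSpace _ _) (dXp_mem_weightSpace _ _)) (dXp_mem_weightSpace _ _)))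
      (Submodule.smul_mem _ _ (sbr_mem_weightSpace _ _ _ (sbr_mem_weightSpace _ _ _
        (dXp_mem_weightSpace _ _) (dXp_mem_weightSpace _ _)) (dXp_mem_weightSpace _ _))),
      zero_mem _⟩
  | serreD3_m _ i i' _ _ rv k =>
    refine ⟨_, sum_mem_weightSpace_of_modEq (fun σ _ => add_mem
      (Submodule.smul_mem _ _ (sbr_mem_weightSpace _ _ _ (sbr_mem_weightSpace _ _ _
        (dXm_mem_weightSpace _ _) (dXm_mem_weightSpace _ _)) (dXm_mem_weightSpace _ _)))
      (mem_weightSpace_of_modEq (Submodule.smul_mem _ _ (sbr_mem_weightSpace _ _ _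
        (sbr_mem_weightSpace _ _ _ (dXm_mem_weightSpace _ _) (dXm_mem_weightSpace _ _))
        (dXm_mem_weightSpace _ _))) (by rw [Int.ModEq]; omega)))
      (w := 2 * (rv 0 + rv 1 + k) - 2) fun σ _ => ?_, zero_mem _⟩
    have := σ.fin_two_add_eq rv
    rw [Int.ModEq]
    omega
  | serreE_p _ i i' _ _ rv k =>
    exact ⟨_, sum_mem fun σ _ => sbr_mem_weightSpace _ _ _ (sbr_mem_weightSpace _ _ _
      (dXp_mem_weightSpace _ _) (dXp_mem_weightSpace _ _)) (dXp_mem_weightSpace _ _), zero_mem _⟩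
  | serreE_m _ i i' _ _ rv k =>
    refine ⟨_, sum_mem_weightSpace_of_modEq (fun σ _ => sbr_mem_weightSpace _ _ _
      (sbr_mem_weightSpace _ _ _ (dXm_mem_weightSpace _ _) (dXm_mem_weightSpace _ _))
      (dXm_mem_weightSpace _ _)) (w := 2 * (rv 0 + rv 1 + k) - 2) fun σ _ => ?_, zero_mem _⟩
    have := σ.fin_two_add_eq rv
    rw [Int.ModEq]
    omega

section Twist

variable {c : Gcase} {n : ℕ}

variable (c n) in
def twist : UqD c n →ₐ[KK] UqD c n :=
  RingQuot.liftAlgHom KK ⟨(dπ c n).comp (FreeAlgebra.weightScale DGen.weight ii),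
    fun _ _ h =>
      let ⟨_, ha, hb⟩ := h.exists_weightSpace
      RingQuot.mkAlgHom_eq_of_mem_eigenspace _ h ha hb⟩

theorem twist_dπ (x : DF n) :
    twist c n (dπ c n x) = dπ c n (FreeAlgebra.weightScale DGen.weight ii x) :=
  RingQuot.liftAlgHom_mkAlgHom_apply _ _ _ _

theorem twist_dπ_of_mem_weightSpace {w : ℤ} {x : DF n} (hx : x ∈ weightSpace n w) :
    twist c n (dπ c n x) = ii ^ w • dπ c n x := by
  rw [twist_dπ, mem_weightSpace_iff.1 hx, map_smul]

variable (c n) in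
theorem twist_pow_four : twist c n ^ 4 = 1 := by
  refine RingQuot.ringQuot_ext' _ _ _ (FreeAlgebra.hom_ext (funext fun g => ?_))
  have hg := twist_dπ_of_mem_weightSpace (c := c) (ι_mem_weightSpace g)
  change (twist c n ^ 4) (dπ c n (FreeAlgebra.ι KK g)) = dπ c n (FreeAlgebra.ι KK g)
  simp only [pow_succ, pow_zero, one_mul, AlgHom.mul_apply, hg, map_smul, smul_smul]
  rw [← zpow_add₀ ii_ne_zero, ← zpow_add₀ ii_ne_zero, ← zpow_add₀ ii_ne_zero,
    ii_zpow_eq_of_modEq (w' := 0) (by rw [Int.ModEq]; omega), zpow_zero, one_smul]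

variable (c n) in
def twistEquiv : UqD c n ≃ₐ[KK] UqD c n :=
  AlgEquiv.ofAlgHom (twist c n) (twist c n ^ 3)
    ((pow_succ' _ 3).symm.trans (twist_pow_four c n))
    ((pow_succ _ 3).symm.trans (twist_pow_four c n))

theorem twistEquiv_dπ_of_mem_weightSpace {w : ℤ} {x : DF n} (hx : x ∈ weightSpace n w) :
    twistEquiv c n (dπ c n x) = ii ^ w • dπ c n x :=
  twist_dπ_of_mem_weightSpace hx

end Twist

theorem drinfeld_superalgebra_automorphism_general (c : Gcase) (n : ℕ) :
    ∃ φ : UqD c n ≃ₐ[KK] UqD c n,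
      φ (vGh c n) = (-ii) • vGh c n ∧
      (∀ (i : Fin n) (k : ℤ), φ (vXp c n i k) = vXp c n i k) ∧
      (∀ (i : Fin n) (k : ℤ), φ (vXm c n i k) = ((-1 : KK) ^ k) • vXm c n i k) ∧
      (∀ i : Fin n, φ (vGa c n i) = vGa c n i) ∧
      (∀ i : Fin n, φ (vGai c n i) = vGai c n i) ∧
      (∀ (i : Fin n) (k : ℤ), k ≠ 0 → φ (vKa c n i k) = (ii ^ |k|) • vKa c n i k) ∧
      (∀ (i : Fin n) (k : ℕ), φ (vKhatP c n i k) = (ii ^ k) • vKhatP c n i k) ∧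
      (∀ (i : Fin n) (k : ℕ), φ (vKhatM c n i k) = (ii ^ k) • vKhatM c n i k) := by
  refine ⟨twistEquiv c n, ?_, fun i k => ?_, fun i k => ?_, fun i => ?_, fun i => ?_,
    fun i k _ => ?_, fun i k => ?_, fun i k => ?_⟩
  · rw [vGh, twistEquiv_dπ_of_mem_weightSpace dGh_mem_weightSpace, ii_zpow_neg_one]
  · rw [vXp, twistEquiv_dπ_of_mem_weightSpace (dXp_mem_weightSpace i k), zpow_zero, one_smul]
  · rw [vXm, twistEquiv_dπ_of_mem_weightSpace (dXm_mem_weightSpace i k), ii_zpow_two_mul]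
  · rw [vGa, twistEquiv_dπ_of_mem_weightSpace (dGa_mem_weightSpace i), zpow_zero, one_smul]
  · rw [vGai, twistEquiv_dπ_of_mem_weightSpace (dGai_mem_weightSpace i), zpow_zero, one_smul]
  · exact twistEquiv_dπ_of_mem_weightSpace (dKa_mem_weightSpace i k)
  · rw [vKhatP, twistEquiv_dπ_of_mem_weightSpace (khatp_mem_weightSpace c i k), zpow_natCast]
  · rw [vKhatM, twistEquiv_dπ_of_mem_weightSpace (khatm_mem_weightSpace c i k), zpow_natCast]

/-- For `g = osp(1|2n)^{(1)}` or `sl(1|2n)^{(2)}`, the assignments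
`γ^{1/2} ↦ −√−1·γ^{1/2}` (so `γ ↦ −γ`), `ξ⁺_{i,k} ↦ ξ⁺_{i,k}`, `ξ⁻_{i,k} ↦ (−1)^k ξ⁻_{i,k}`,
`γ_i^{±1} ↦ γ_i^{±1}`, `κ_{i,k} ↦ (√−1)^{|k|} κ_{i,k}` extend to a `K`-superalgebra
automorphism of the Drinfeld superalgebra `U_q^D(g)`; under this automorphism
`κ̂⁺_{i,k} ↦ (√−1)^k κ̂⁺_{i,k}` and `κ̂⁻_{i,−k} ↦ (√−1)^k κ̂⁻_{i,−k}` for all `k ≥ 0`. -/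
theorem drinfeld_superalgebra_automorphism (c : Gcase) (n : ℕ) [NeZero n]
    (hc : c = Gcase.osp1 ∨ c = Gcase.sl2) :
    ∃ φ : UqD c n ≃ₐ[KK] UqD c n,
      φ (vGh c n) = (-ii) • vGh c n ∧
      (∀ (i : Fin n) (k : ℤ), φ (vXp c n i k) = vXp c n i k) ∧
      (∀ (i : Fin n) (k : ℤ), φ (vXm c n i k) = ((-1 : KK) ^ k) • vXm c n i k) ∧
      (∀ i : Fin n, φ (vGa c n i) = vGa c n i) ∧
      (∀ i : Fin n, φ (vGai c n i) = vGai c n i) ∧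
      (∀ (i : Fin n) (k : ℤ), k ≠ 0 → φ (vKa c n i k) = (ii ^ |k|) • vKa c n i k) ∧
      (∀ (i : Fin n) (k : ℕ), φ (vKhatP c n i k) = (ii ^ k) • vKhatP c n i k) ∧
      (∀ (i : Fin n) (k : ℕ), φ (vKhatM c n i k) = (ii ^ k) • vKhatM c n i k) :=
  drinfeld_superalgebra_automorphism_general c n
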